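/- Let d ≥ 1, let V be a positive-definite 2d×2d real matrix with d×d blocks V = [[Σ₁, Ω], [Ωᵀ, Σ₂]], let H be a symmetric positive-semidefinite d×d real matrix, and let ω ∈ [0,1]. Let (μₙ) be Borel probability measures on ℝ^d × ℝ^d (identified with ℝ^{2d}) converging weakly to the centered multivariate Gaussian measure N(0, V). Then lim_{ν→∞} liminf_{n→∞} ∫ min( ((1−ω)x₁ + ωx₂)ᵀ H ((1−ω)x₁ + ωx₂), ν ) dμₙ(x₁, x₂) = (1−ω)²·tr(HΣ₁) + ω²·tr(HΣ₂) + 2ω(1−ω)·tr(HΩ). -/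

import Mathlib

open MeasureTheory Matrix Filter

/-- The centered multivariate Gaussian measure `N(0, V)` on `ℝ^ι`, defined by its Lebesgue
density `(2π)^{-d/2} det(V)^{-1/2} exp(-xᵀ V⁻¹ x/2)`. -/
noncomputable def centeredGaussian {ι : Type*} [Fintype ι] [DecidableEq ι]
    (V : Matrix ι ι ℝ) : Measure (ι → ℝ) :=
  volume.withDensity fun x =>
    ENNReal.ofReal ((2 * Real.pi) ^ (-(Fintype.card ι : ℝ) / 2) * V.det ^ (-(1 : ℝ) / 2) *
      Real.exp (-(x ⬝ᵥ V⁻¹ *ᵥ x) / 2))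

/-!
Writing `A = √V`, the linear change of variables `x = A y` turns the density of `N(0, V)` into
the product of standard normal densities, so `N(0, V)` is Mathlib's `multivariateGaussian 0 V`;
its second moments are the entries of `V`, whence `E[(Bx)ᵀ H (Bx)] = tr(H B V Bᵀ)`. The pooled
vector is `B x` with `B = [(1-ω) I, ω I]`, and `B V Bᵀ = (1-ω)² Σ₁ + ω(1-ω)(Ω + Ωᵀ) + ω² Σ₂`.
For each `ν` the truncation `min(q, ν)` of the nonnegative continuous quadratic form `q` is a
bounded continuous function, so weak convergence identifies the `liminf` with its Gaussian
integral; dominated convergence then lets `ν → ∞`.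
-/

open ProbabilityTheory

section CenteredGaussian

variable {ι : Type*} [Fintype ι]

lemma pi_gaussianReal_eq_withDensity :
    Measure.pi (fun _ : ι => gaussianReal 0 1) =
      volume.withDensity fun y => ENNReal.ofReal (∏ i, gaussianPDFReal 0 1 (y i)) := by
  refine Measure.pi_eq (μ := fun _ : ι => gaussianReal 0 1) fun s hs => ?_
  have hint : Integrable (fun y : ι → ℝ => ∏ i, gaussianPDFReal 0 1 (y i))
      (Measure.pi fun i => volume.restrict (s i)) :=
    Integrable.fintype_prod fun i => (integrable_gaussianPDFReal 0 1).restrict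
  rw [withDensity_apply _ (MeasurableSet.univ_pi hs), volume_pi, Measure.restrict_pi_pi,
    ← ofReal_integral_eq_lintegral_ofReal hint
      (ae_of_all _ fun y => Finset.prod_nonneg fun i _ => gaussianPDFReal_nonneg 0 1 _),
    integral_fintype_prod_eq_prod, ENNReal.ofReal_prod_of_nonneg
      fun i _ => setIntegral_nonneg_of_ae (ae_of_all _ fun t => gaussianPDFReal_nonneg 0 1 t)]
  simp_rw [gaussianReal_apply_eq_integral 0 one_ne_zero]

lemma dotProduct_mulVec_eq_sum (M : Matrix ι ι ℝ) (x : ι → ℝ) :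
    x ⬝ᵥ M *ᵥ x = ∑ a, ∑ b, M a b * (x a * x b) := by
  simp only [dotProduct, mulVec, Finset.mul_sum]
  exact Finset.sum_congr rfl fun a _ => Finset.sum_congr rfl fun b _ => by ring

lemma mulVec_dotProduct_mulVec_mulVec {κ : Type*} [Fintype κ] (B : Matrix κ ι ℝ)
    (H : Matrix κ κ ℝ) (x : ι → ℝ) :
    B *ᵥ x ⬝ᵥ H *ᵥ B *ᵥ x = x ⬝ᵥ (Bᵀ * H * B) *ᵥ x := by
  rw [← mulVec_mulVec, ← mulVec_mulVec, dotProduct_mulVec x Bᵀ, vecMul_transpose]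

variable [DecidableEq ι]

noncomputable def centeredGaussianPDFReal (V : Matrix ι ι ℝ) (x : ι → ℝ) : ℝ :=
  (2 * Real.pi) ^ (-(Fintype.card ι : ℝ) / 2) * V.det ^ (-(1 : ℝ) / 2) *
    Real.exp (-(x ⬝ᵥ V⁻¹ *ᵥ x) / 2)

lemma centeredGaussian_eq_withDensity (V : Matrix ι ι ℝ) :
    centeredGaussian V = volume.withDensity fun x => ENNReal.ofReal (centeredGaussianPDFReal V x) :=
  rfl

lemma lintegral_comp_mulVec {M : Matrix ι ι ℝ} (hM : M.det ≠ 0) {f : (ι → ℝ) → ENNReal}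
    (hf : Measurable f) :
    ∫⁻ x, f x = ENNReal.ofReal |M.det| * ∫⁻ y, f (M *ᵥ y) := by
  simp_rw [← toLin'_apply M]
  rw [← lintegral_map hf (toLin' M).continuous_of_finiteDimensional.measurable,
    Real.map_matrix_volume_pi_eq_smul_volume_pi hM,
    lintegral_smul_measure, smul_eq_mul, ← mul_assoc, ← ENNReal.ofReal_mul (abs_nonneg _),
    abs_inv, mul_inv_cancel₀ (abs_ne_zero.2 hM), ENNReal.ofReal_one, one_mul]

lemma mulVec_dotProduct_mul_transpose_inv_mulVec {R : Type*} [CommRing R] {A : Matrix ι ι R}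
    (hA : IsUnit A.det) (y : ι → R) :
    A *ᵥ y ⬝ᵥ (A * Aᵀ)⁻¹ *ᵥ A *ᵥ y = y ⬝ᵥ y := by
  rw [Matrix.mul_inv_rev, mulVec_mulVec, Matrix.mul_assoc, nonsing_inv_mul _ hA, Matrix.mul_one,
    ← vecMul_transpose, ← dotProduct_mulVec, mulVec_mulVec,
    mul_nonsing_inv _ (by rwa [det_transpose]), one_mulVec]

lemma abs_det_mul_centeredGaussianPDFReal_mul_transpose {A : Matrix ι ι ℝ} (hA : A.det ≠ 0)
    (y : ι → ℝ) :
    |A.det| * centeredGaussianPDFReal (A * Aᵀ) (A *ᵥ y) = ∏ i, gaussianPDFReal 0 1 (y i) := by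
  have hdet : (A * Aᵀ).det ^ (-(1 : ℝ) / 2) = |A.det|⁻¹ := by
    rw [det_mul, det_transpose, ← sq, ← sq_abs, ← Real.rpow_natCast,
      ← Real.rpow_mul (abs_nonneg _)]
    norm_num [Real.rpow_neg_one]
  have hpi : (2 * Real.pi) ^ (-(Fintype.card ι : ℝ) / 2) = ∏ _i : ι, (√(2 * Real.pi))⁻¹ := by
    rw [Finset.prod_const, Finset.card_univ, Real.sqrt_eq_rpow, ← Real.rpow_neg (by positivity),
      ← Real.rpow_natCast, ← Real.rpow_mul (by positivity)]
    ring_nf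
  rw [centeredGaussianPDFReal, mulVec_dotProduct_mul_transpose_inv_mulVec hA.isUnit, hdet, hpi]
  simp only [gaussianPDFReal, dotProduct]
  rw [Finset.prod_mul_distrib, ← Real.exp_sum]
  field_simp
  simp [Finset.sum_neg_distrib, Finset.sum_div]

lemma centeredGaussian_mul_transpose_eq_map {A : Matrix ι ι ℝ} (hA : A.det ≠ 0) :
    centeredGaussian (A * Aᵀ) = (Measure.pi fun _ : ι => gaussianReal 0 1).map (A *ᵥ ·) := by
  have hL : Measurable (A *ᵥ · : (ι → ℝ) → ι → ℝ) := by fun_prop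
  ext s hs
  rw [pi_gaussianReal_eq_withDensity, Measure.map_apply hL hs, withDensity_apply _ (hL hs),
    centeredGaussian_eq_withDensity, withDensity_apply _ hs, ← lintegral_indicator hs,
    lintegral_comp_mulVec hA
      (Measurable.indicator (by unfold centeredGaussianPDFReal; fun_prop) hs),
    ← lintegral_indicator (hL hs), ← lintegral_const_mul' _ _ ENNReal.ofReal_ne_top]
  congr 1 with y
  by_cases hy : A *ᵥ y ∈ s
  · rw [Set.indicator_of_mem hy, Set.indicator_of_mem (Set.mem_preimage.2 hy),
      ← ENNReal.ofReal_mul (abs_nonneg _), abs_det_mul_centeredGaussianPDFReal_mul_transpose hA]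
  · rw [Set.indicator_of_notMem hy, Set.indicator_of_notMem (by exact hy), mul_zero]

open scoped MatrixOrder in
lemma Matrix.PosSemidef.sqrt_mul_transpose_sqrt {V : Matrix ι ι ℝ} (hV : V.PosSemidef) :
    CFC.sqrt V * (CFC.sqrt V)ᵀ = V := by
  have hsymm : (CFC.sqrt V)ᵀ = CFC.sqrt V := by
    simpa [conjTranspose_eq_transpose_of_trivial] using
      (Matrix.nonneg_iff_posSemidef.1 (CFC.sqrt_nonneg V)).isHermitian.eq
  rw [hsymm, CFC.sqrt_mul_sqrt_self V hV.nonneg]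

open scoped MatrixOrder in
lemma centeredGaussian_eq_map_multivariateGaussian {V : Matrix ι ι ℝ} (hV : V.PosDef) :
    centeredGaussian V = (multivariateGaussian 0 V).map WithLp.ofLp := by
  have hVA := hV.posSemidef.sqrt_mul_transpose_sqrt
  have hA : (CFC.sqrt V).det ≠ 0 := fun h => hV.det_pos.ne' (by rw [← hVA, det_mul, h, zero_mul])
  nth_rewrite 1 [← hVA]
  rw [centeredGaussian_mul_transpose_eq_map hA, multivariateGaussian, ← map_pi_eq_stdGaussian,
    Measure.map_map (by fun_prop) (by fun_prop), Measure.map_map (by fun_prop) (by fun_prop)]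
  congr 1 with y
  simp [toEuclideanCLM_toLp]

lemma memLp_apply_multivariateGaussian {μ : EuclideanSpace ℝ ι} {V : Matrix ι ι ℝ}
    (hV : V.PosSemidef) (i : ι) :
    MemLp (fun z : EuclideanSpace ℝ ι => z i) 2 (multivariateGaussian μ V) :=
  (memLp_id_gaussianReal 2).comp_measurePreserving (measurePreserving_eval_multivariateGaussian hV)

lemma integral_apply_multivariateGaussian {μ : EuclideanSpace ℝ ι} {V : Matrix ι ι ℝ}
    (hV : V.PosSemidef) (i : ι) :
    ∫ z : EuclideanSpace ℝ ι, z i ∂(multivariateGaussian μ V) = μ i := by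
  have h := integral_map (f := fun t : ℝ => t) (φ := fun z : EuclideanSpace ℝ ι => z i)
    (μ := multivariateGaussian μ V) (by fun_prop) aestronglyMeasurable_id
  rw [(measurePreserving_eval_multivariateGaussian hV).map_eq, integral_id_gaussianReal] at h
  exact h.symm

lemma integrable_mul_apply_centeredGaussian {V : Matrix ι ι ℝ} (hV : V.PosDef) (a b : ι) :
    Integrable (fun x => x a * x b) (centeredGaussian V) := by
  rw [centeredGaussian_eq_map_multivariateGaussian hV,
    integrable_map_measure (by fun_prop) (by fun_prop)]
  exact (memLp_apply_multivariateGaussian hV.posSemidef a).integrable_mul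
    (memLp_apply_multivariateGaussian hV.posSemidef b)

lemma integral_mul_apply_centeredGaussian {V : Matrix ι ι ℝ} (hV : V.PosDef) (a b : ι) :
    ∫ x, x a * x b ∂(centeredGaussian V) = V a b := by
  rw [centeredGaussian_eq_map_multivariateGaussian hV, integral_map (by fun_prop) (by fun_prop)]
  have hcov := covariance_eq_sub (memLp_apply_multivariateGaussian (μ := 0) hV.posSemidef a)
    (memLp_apply_multivariateGaussian hV.posSemidef b)
  rw [covariance_eval_multivariateGaussian hV.posSemidef,
    integral_apply_multivariateGaussian hV.posSemidef,
    integral_apply_multivariateGaussian hV.posSemidef] at hcov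
  simpa using hcov.symm

lemma integrable_dotProduct_mulVec_centeredGaussian {V : Matrix ι ι ℝ} (hV : V.PosDef)
    (M : Matrix ι ι ℝ) :
    Integrable (fun x => x ⬝ᵥ M *ᵥ x) (centeredGaussian V) := by
  simp_rw [dotProduct_mulVec_eq_sum]
  exact integrable_finsetSum _ fun a _ => integrable_finsetSum _ fun b _ =>
    (integrable_mul_apply_centeredGaussian hV a b).const_mul _

lemma integral_dotProduct_mulVec_centeredGaussian {V : Matrix ι ι ℝ} (hV : V.PosDef)
    (M : Matrix ι ι ℝ) :
    ∫ x, x ⬝ᵥ M *ᵥ x ∂(centeredGaussian V) = (M * V).trace := by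
  have hint (a b : ι) := (integrable_mul_apply_centeredGaussian hV a b).const_mul (M a b)
  simp_rw [dotProduct_mulVec_eq_sum]
  rw [integral_finsetSum _ fun a _ => integrable_finsetSum _ fun b _ => hint a b]
  simp only [integral_finsetSum _ fun b _ => hint _ b, integral_const_mul,
    integral_mul_apply_centeredGaussian hV, trace, diag, mul_apply]
  exact Finset.sum_congr rfl fun a _ => Finset.sum_congr rfl fun b _ => by
    rw [← hV.isHermitian.apply a b, star_trivial]

variable {κ : Type*} [Fintype κ]

lemma integrable_mulVec_dotProduct_mulVec_centeredGaussian {V : Matrix ι ι ℝ} (hV : V.PosDef)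
    (B : Matrix κ ι ℝ) (H : Matrix κ κ ℝ) :
    Integrable (fun x => B *ᵥ x ⬝ᵥ H *ᵥ B *ᵥ x) (centeredGaussian V) := by
  simp_rw [mulVec_dotProduct_mulVec_mulVec]
  exact integrable_dotProduct_mulVec_centeredGaussian hV _

lemma integral_mulVec_dotProduct_mulVec_centeredGaussian {V : Matrix ι ι ℝ} (hV : V.PosDef)
    (B : Matrix κ ι ℝ) (H : Matrix κ κ ℝ) :
    ∫ x, B *ᵥ x ⬝ᵥ H *ᵥ B *ᵥ x ∂(centeredGaussian V) = (H * (B * V * Bᵀ)).trace := by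
  simp_rw [mulVec_dotProduct_mulVec_mulVec, integral_dotProduct_mulVec_centeredGaussian hV]
  rw [show Bᵀ * H * B * V = Bᵀ * (H * B * V) by simp only [Matrix.mul_assoc], trace_mul_comm Bᵀ]
  simp only [Matrix.mul_assoc]

end CenteredGaussian

lemma tendsto_integral_min_atTop {X : Type*} [MeasurableSpace X] {μ : Measure X} {f : X → ℝ}
    (hf : Integrable f μ) (hf₀ : 0 ≤ᵐ[μ] f) :
    Tendsto (fun ν : ℝ => ∫ x, min (f x) ν ∂μ) atTop (nhds (∫ x, f x ∂μ)) := by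
  refine tendsto_integral_filter_of_dominated_convergence f
    (Eventually.of_forall fun ν => hf.aestronglyMeasurable.inf aestronglyMeasurable_const) ?_ hf
    (Eventually.of_forall fun x => tendsto_const_nhds.congr' ?_)
  · filter_upwards [eventually_ge_atTop 0] with ν hν
    filter_upwards [hf₀] with x hx
    rw [Real.norm_of_nonneg (le_min hx hν)]
    exact min_le_left _ _
  · filter_upwards [eventually_ge_atTop (f x)] with ν hν
    exact (min_eq_left hν).symm

lemma liminf_integral_min_eq_of_forall_tendsto {X : Type*} [TopologicalSpace X]
    [MeasurableSpace X] {μ : ℕ → Measure X} {μ' : Measure X}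
    (hweak : ∀ g : BoundedContinuousFunction X ℝ,
      Tendsto (fun n => ∫ x, g x ∂(μ n)) atTop (nhds (∫ x, g x ∂μ')))
    {f : X → ℝ} (hf : Continuous f) {c : ℝ} (hc : ∀ x, c ≤ f x) (ν : ℝ) :
    liminf (fun n => ∫ x, min (f x) ν ∂(μ n)) atTop = ∫ x, min (f x) ν ∂μ' := by
  have hbound (x : X) : ‖min (f x) ν‖ ≤ max |c| |ν| := by
    rw [Real.norm_eq_abs, abs_le]
    refine ⟨le_min ?_ ?_, ?_⟩
    · exact (neg_le.2 ((neg_le_abs c).trans (le_max_left _ _))).trans (hc x)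
    · exact neg_le.2 ((neg_le_abs ν).trans (le_max_right _ _))
    · exact (min_le_right _ _).trans ((le_abs_self ν).trans (le_max_right _ _))
  exact (hweak (.ofNormedAddCommGroup _ (hf.min continuous_const) _ hbound)).liminf_eq

lemma fromCols_smul_one_mul_fromBlocks_mul_transpose {n R : Type*} [Fintype n] [DecidableEq n]
    [CommRing R] (a b : R) (S₁ O P S₂ : Matrix n n R) :
    (fromCols (a • 1) (b • 1) : Matrix n (n ⊕ n) R) * fromBlocks S₁ O P S₂ *
        (fromCols (a • 1) (b • 1) : Matrix n (n ⊕ n) R)ᵀ =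
      a ^ 2 • S₁ + (a * b) • (O + P) + b ^ 2 • S₂ := by
  rw [fromCols_mul_fromBlocks, transpose_fromCols, fromCols_mul_fromRows]
  simp only [transpose_smul, transpose_one, Matrix.smul_mul, Matrix.one_mul, Matrix.mul_smul,
    Matrix.mul_one]
  module

theorem pooled_trimmed_risk_tendsto_gaussian_general
    (d : ℕ) (S₁ S₂ O : Matrix (Fin d) (Fin d) ℝ)
    (hV : (Matrix.fromBlocks S₁ O Oᵀ S₂).PosDef)
    (H : Matrix (Fin d) (Fin d) ℝ) (hH : H.PosSemidef)
    (ω : ℝ)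
    (μₙ : ℕ → Measure ((Fin d ⊕ Fin d) → ℝ))
    (hweak : ∀ f : BoundedContinuousFunction ((Fin d ⊕ Fin d) → ℝ) ℝ,
      Tendsto (fun n => ∫ x, f x ∂(μₙ n)) atTop
        (nhds (∫ x, f x ∂(centeredGaussian (Matrix.fromBlocks S₁ O Oᵀ S₂))))) :
    Tendsto
      (fun ν : ℝ => liminf
        (fun n => ∫ x,
          min ((((1 - ω) • fun i => x (Sum.inl i)) + ω • fun i => x (Sum.inr i)) ⬝ᵥ
            H *ᵥ (((1 - ω) • fun i => x (Sum.inl i)) + ω • fun i => x (Sum.inr i))) ν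
          ∂(μₙ n)) atTop)
      atTop
      (nhds ((1 - ω) ^ 2 * (H * S₁).trace + ω ^ 2 * (H * S₂).trace +
        2 * ω * (1 - ω) * (H * O).trace)) := by
  set B : Matrix (Fin d) (Fin d ⊕ Fin d) ℝ := fromCols ((1 - ω) • 1) (ω • 1)
  have hpool (x : (Fin d ⊕ Fin d) → ℝ) :
      (((1 - ω) • fun i => x (Sum.inl i)) + ω • fun i => x (Sum.inr i)) = B *ᵥ x := by
    simp only [B, fromCols_mulVec, smul_mulVec, one_mulVec]
    rfl
  have hrisk : (H * (B * fromBlocks S₁ O Oᵀ S₂ * Bᵀ)).trace = (1 - ω) ^ 2 * (H * S₁).trace +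
      ω ^ 2 * (H * S₂).trace + 2 * ω * (1 - ω) * (H * O).trace := by
    have hHO : (H * Oᵀ).trace = (H * O).trace := by
      rw [← trace_transpose, transpose_mul, transpose_transpose,
        ← conjTranspose_eq_transpose_of_trivial, hH.isHermitian, trace_mul_comm]
    rw [fromCols_smul_one_mul_fromBlocks_mul_transpose]
    simp only [Matrix.mul_add, trace_add, Matrix.mul_smul, trace_smul, smul_eq_mul, hHO]
    ring
  have hnonneg (x : (Fin d ⊕ Fin d) → ℝ) : 0 ≤ B *ᵥ x ⬝ᵥ H *ᵥ B *ᵥ x :=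
    hH.dotProduct_mulVec_nonneg _
  simp_rw [hpool, liminf_integral_min_eq_of_forall_tendsto hweak (by fun_prop) hnonneg, ← hrisk,
    ← integral_mulVec_dotProduct_mulVec_centeredGaussian hV B H]
  exact tendsto_integral_min_atTop (integrable_mulVec_dotProduct_mulVec_centeredGaussian hV B H)
    (ae_of_all _ hnonneg)

/-- Pooled trimmed asymptotic risk under joint weak convergence to a centered Gaussian:
if probability measures `μₙ` on `ℝ^d × ℝ^d ≅ ℝ^{2d}` converge weakly to `N(0, V)` with
`V = [[Σ₁, Ω], [Ωᵀ, Σ₂]]` positive definite, `H` is symmetric positive semidefinite and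
`ω ∈ [0,1]`, then
`lim_{ν→∞} liminf_n ∫ min(((1-ω)x₁ + ωx₂)ᵀH((1-ω)x₁ + ωx₂), ν) dμₙ(x₁,x₂)
  = (1-ω)² tr(HΣ₁) + ω² tr(HΣ₂) + 2ω(1-ω) tr(HΩ)`. -/
theorem pooled_trimmed_risk_tendsto_gaussian
    (d : ℕ) (hd : 1 ≤ d) (S₁ S₂ O : Matrix (Fin d) (Fin d) ℝ)
    (hV : (Matrix.fromBlocks S₁ O Oᵀ S₂).PosDef)
    (H : Matrix (Fin d) (Fin d) ℝ) (hH : H.PosSemidef)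
    (ω : ℝ) (hω : ω ∈ Set.Icc (0 : ℝ) 1)
    (μₙ : ℕ → Measure ((Fin d ⊕ Fin d) → ℝ)) [∀ n, IsProbabilityMeasure (μₙ n)]
    (hweak : ∀ f : BoundedContinuousFunction ((Fin d ⊕ Fin d) → ℝ) ℝ,
      Tendsto (fun n => ∫ x, f x ∂(μₙ n)) atTop
        (nhds (∫ x, f x ∂(centeredGaussian (Matrix.fromBlocks S₁ O Oᵀ S₂))))) :
    Tendsto
      (fun ν : ℝ => liminf
        (fun n => ∫ x,
          min ((((1 - ω) • fun i => x (Sum.inl i)) + ω • fun i => x (Sum.inr i)) ⬝ᵥ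
            H *ᵥ (((1 - ω) • fun i => x (Sum.inl i)) + ω • fun i => x (Sum.inr i))) ν
          ∂(μₙ n)) atTop)
      atTop
      (nhds ((1 - ω) ^ 2 * (H * S₁).trace + ω ^ 2 * (H * S₂).trace +
        2 * ω * (1 - ω) * (H * O).trace)) :=
  pooled_trimmed_risk_tendsto_gaussian_general d S₁ S₂ O hV H hH ω μₙ hweak
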